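/- arXiv:2509.00871 — 2 statements merged into one kernel-verified Lean document; each statement's English description precedes it below -/
import Mathlib

section
/- Every positive root β ∈ Φ⁺ lies in exactly two rank-2 parabolic subsystems of Φ. Moreover, if β is not a simple root (β ∉ Δ), then β is relatively simple in exactly one of the two rank-2 parabolic subsystems containing it. -/
open scoped NNReal

noncomputable section

/-- The ambient vector space `V = ℝ³`. -/
abbrev V : Type := Fin 3 → ℝ

/-- The symmetric bilinear form with `⟨αᵢ,αⱼ⟩ = 1` if `i = j` and `-1` otherwise. -/
def B (x y : V) : ℝ := 2 * (∑ i, x i * y i) - (∑ i, x i) * (∑ i, y i)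

/-- The associated quadratic form. -/
def Q (x : V) : ℝ := B x x

/-- The simple roots `α₁, α₂, α₃` (the standard basis vectors). -/
def α (i : Fin 3) : V := Pi.single i 1

/-- The set of simple roots. -/
def Δ : Set V := Set.range α

/-- `f` is the reflection `r_{αᵢ} : x ↦ x - 2⟨αᵢ,x⟩αᵢ` for some `i` (note `⟨αᵢ,αᵢ⟩ = 1`). -/
def IsSimpleReflection (f : V ≃ₗ[ℝ] V) : Prop :=
  ∃ i : Fin 3, ∀ x : V, f x = x - (2 * B (α i) x) • α i

/-- The group `W ≤ GL(V)` generated by the three simple reflections: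
the standard reflection representation of `U₃`. -/
def W : Subgroup (V ≃ₗ[ℝ] V) := Subgroup.closure {f | IsSimpleReflection f}

/-- The root system `Φ = {w·αᵢ : w ∈ W, i ∈ {1,2,3}}`. -/
def Φ : Set V := {x | ∃ w ∈ W, ∃ i : Fin 3, x = w (α i)}

/-- `Span_{≥0}(X)`: the set of nonnegative linear combinations of elements of `X`. -/
def nnspan (X : Set V) : Set V := (Submodule.span ℝ≥0 X : Set V)

/-- The positive roots `Φ⁺ = Φ ∩ Span_{≥0}(Δ)`. -/
def Φpos : Set V := Φ ∩ nnspan Δ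

/-- `R ⊆ Φ⁺` is closed if for all `a, b ∈ R`, `Span_{≥0}{a,b} ∩ Φ⁺ ⊆ R`. -/
def IsClosedSet (R : Set V) : Prop := ∀ a ∈ R, ∀ b ∈ R, nnspan {a, b} ∩ Φpos ⊆ R

/-- `R` is a biclosed subset of `Φ⁺`. -/
def IsBiclosed (R : Set V) : Prop := R ⊆ Φpos ∧ IsClosedSet R ∧ IsClosedSet (Φpos \ R)

/-- A rank-2 parabolic subsystem `w·(Span{αᵢ,αⱼ} ∩ Φ)`. -/
def IsRank2Parabolic (P : Set V) : Prop :=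
  ∃ w ∈ W, ∃ i j : Fin 3, i ≠ j ∧
    P = (fun x => w x) '' ((Submodule.span ℝ {α i, α j} : Set V) ∩ Φ)

/-- `R'` is closed in the set of positive roots `Φ'pos` of a subsystem. -/
def IsClosedIn (Φ'pos R' : Set V) : Prop := ∀ a ∈ R', ∀ b ∈ R', nnspan {a, b} ∩ Φ'pos ⊆ R'

/-- `R'` is biclosed in the set of positive roots `Φ'pos` of a subsystem. -/
def IsBiclosedIn (Φ'pos R' : Set V) : Prop :=
  R' ⊆ Φ'pos ∧ IsClosedIn Φ'pos R' ∧ IsClosedIn Φ'pos (Φ'pos \ R')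

/-- `R ⊆ Φ⁺` is parabolic biclosed if its intersection with every rank-2 parabolic
subsystem `Φ'` is biclosed in `Φ'⁺`. -/
def IsParabolicBiclosed (R : Set V) : Prop :=
  R ⊆ Φpos ∧ ∀ P, IsRank2Parabolic P → IsBiclosedIn (P ∩ Φpos) (R ∩ P)

/-- `β` is relatively simple in the rank-2 subsystem `P`: it lies in `P⁺ = P ∩ Φ⁺` and
is not a nonnegative linear combination of the roots in `P⁺ \ {β}`. -/
def IsRelativelySimple (P : Set V) (β : V) : Prop :=
  β ∈ P ∩ Φpos ∧ β ∉ nnspan ((P ∩ Φpos) \ {β})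

/-!
A positive root `β` has a unique expression `β = w αⱼ` with `w = sᵢ₁ ⋯ sᵢₖ` and `i₁ ⋯ iₖ j` a
reduced word, i.e. one with no two equal consecutive letters: its coordinates are `≥ 1` exactly
on the letters of the word, and `i₁` is the only index with `⟨αᵢ₁, β⟩ > 0`. Writing rank-2
parabolics as `w {x ∈ Φ | x r = 0}`, the parabolics containing `β` are those of `w` with `r ≠ j`.

If `β` is not simple, let `e` be the last letter of `w` and `a` the third index. Every positive
root `w γ` with `γ e = 0` has `γ` positive, with `γ a > 0` unless `γ = αⱼ`, so `β` is relatively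
simple in the parabolic with `r = e`. Splitting `w = w₀ t` with `t` the longest suffix in the
letters `j, e` gives `β = c w₀ αⱼ + d w₀ αₑ` with `c, d ≥ 1`, so it is not relatively simple in
the parabolic with `r = a`.
-/

lemma B_α_α (p q : Fin 3) : B (α p) (α q) = if p = q then 1 else -1 := by
  fin_cases p <;> fin_cases q <;> simp [B, α, Fin.sum_univ_three] <;> norm_num

lemma B_α_self (i : Fin 3) : B (α i) (α i) = 1 := by simp [B_α_α]

lemma B_α_of_ne {p q : Fin 3} (h : p ≠ q) : B (α p) (α q) = -1 := by simp [B_α_α, h]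

lemma α_apply_of_ne {i p : Fin 3} (h : p ≠ i) : α i p = 0 := Pi.single_eq_of_ne h 1

def Bform : LinearMap.BilinForm ℝ V :=
  LinearMap.mk₂ ℝ B
    (fun _ _ _ => by simp only [B, Fin.sum_univ_three, Pi.add_apply]; ring)
    (fun _ _ _ => by simp only [B, Fin.sum_univ_three, Pi.smul_apply, smul_eq_mul]; ring)
    (fun _ _ _ => by simp only [B, Fin.sum_univ_three, Pi.add_apply]; ring)
    (fun _ _ _ => by simp only [B, Fin.sum_univ_three, Pi.smul_apply, smul_eq_mul]; ring)

lemma Bform_apply (x y : V) : Bform x y = B x y := rfl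

def sRefl (i : Fin 3) : V ≃ₗ[ℝ] V :=
  Module.reflection (f := 2 • Bform (α i)) (x := α i) (by simp [Bform_apply, B_α_self])

lemma sRefl_apply (i : Fin 3) (x : V) : sRefl i x = x - (2 * B (α i) x) • α i := by
  simp [sRefl, Module.reflection_apply, Bform_apply]

@[simp] lemma sRefl_α_self (i : Fin 3) : sRefl i (α i) = -α i := Module.reflection_apply_self _

@[simp] lemma sRefl_sRefl (i : Fin 3) (x : V) : sRefl i (sRefl i x) = x :=
  Module.involutive_reflection _ x

@[simp] lemma sRefl_mul_self (i : Fin 3) : sRefl i * sRefl i = 1 :=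
  mul_eq_one_iff_eq_inv.2 (Module.reflection_inv _).symm

lemma sRefl_apply_of_ne {i p : Fin 3} (h : p ≠ i) (x : V) : sRefl i x p = x p := by
  simp [sRefl_apply, α_apply_of_ne h]

lemma sRefl_apply_self (i : Fin 3) (x : V) : sRefl i x i = x i - 2 * B (α i) x := by
  simp [sRefl_apply, α]

lemma B_sRefl (p i : Fin 3) (x : V) :
    B (α p) (sRefl i x) = B (α p) x - 2 * B (α i) x * B (α p) (α i) := by
  simp only [sRefl_apply, ← Bform_apply, map_sub, map_smul, smul_eq_mul]

lemma isSimpleReflection_iff {f : V ≃ₗ[ℝ] V} : IsSimpleReflection f ↔ ∃ i, f = sRefl i := by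
  simp only [IsSimpleReflection, LinearEquiv.ext_iff, sRefl_apply]

def word (l : List (Fin 3)) : V ≃ₗ[ℝ] V := (l.map sRefl).prod

@[simp] lemma word_nil : word [] = 1 := rfl

@[simp] lemma word_cons (i : Fin 3) (l : List (Fin 3)) : word (i :: l) = sRefl i * word l := rfl

lemma word_append (l m : List (Fin 3)) : word (l ++ m) = word l * word m := by
  simp [word]

lemma word_mem_W (l : List (Fin 3)) : word l ∈ W :=
  list_prod_mem fun f hf => by
    obtain ⟨i, -, rfl⟩ := List.mem_map.1 hf
    exact Subgroup.subset_closure (isSimpleReflection_iff.2 ⟨i, rfl⟩)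

lemma inv_word (l : List (Fin 3)) : (word l)⁻¹ = word l.reverse := by
  induction l with
  | nil => rfl
  | cons i l ih =>
    rw [word_cons, mul_inv_rev, ih, List.reverse_cons, word_append, word_cons, word_nil, mul_one,
      inv_eq_of_mul_eq_one_left (sRefl_mul_self i)]

lemma word_apply_of_notMem {l : List (Fin 3)} {r : Fin 3} (hr : r ∉ l) (x : V) :
    word l x r = x r := by
  induction l with
  | nil => rfl
  | cons i l ih =>
    rw [List.mem_cons, not_or] at hr
    rw [word_cons, LinearEquiv.mul_apply, sRefl_apply_of_ne hr.1, ih hr.2]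

lemma inv_word_apply_of_notMem {l : List (Fin 3)} {r : Fin 3} (hr : r ∉ l) (x : V) :
    (word l)⁻¹ x r = x r := by
  rw [inv_word, word_apply_of_notMem (List.mem_reverse.not.2 hr)]

lemma exists_word_eq_of_mem_W {w : V ≃ₗ[ℝ] V} (hw : w ∈ W) : ∃ l, word l = w := by
  induction hw using Subgroup.closure_induction with
  | mem f hf =>
    obtain ⟨i, rfl⟩ := isSimpleReflection_iff.1 hf
    exact ⟨[i], mul_one _⟩
  | one => exact ⟨[], rfl⟩
  | mul f g _ _ hf hg =>
    obtain ⟨l, rfl⟩ := hf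
    obtain ⟨m, rfl⟩ := hg
    exact ⟨l ++ m, word_append l m⟩
  | inv f _ hf =>
    obtain ⟨l, rfl⟩ := hf
    exact ⟨l.reverse, (inv_word l).symm⟩

/-- In the universal Coxeter group the only relations are `sᵢ² = 1`, so a word is reduced exactly
when no two consecutive letters agree. -/
abbrev IsReducedWord (l : List (Fin 3)) : Prop := l.IsChain (· ≠ ·)

lemma exists_isReducedWord_word_eq (l : List (Fin 3)) : ∃ m, IsReducedWord m ∧ word m = word l := by
  induction l with
  | nil => exact ⟨[], .nil, rfl⟩
  | cons i l ih =>
    obtain ⟨m, hm, he⟩ := ih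
    match m, hm with
    | [], _ => exact ⟨[i], .singleton i, by simp [← he]⟩
    | a :: t, hm =>
      by_cases h : a = i
      · refine ⟨t, hm.tail, ?_⟩
        rw [word_cons, ← he, h, word_cons, ← mul_assoc, sRefl_mul_self, one_mul]
      · exact ⟨i :: a :: t, hm.cons_cons (Ne.symm h), by rw [word_cons, he, word_cons]⟩

lemma exists_isReducedWord_word_eq_of_mem_W {w : V ≃ₗ[ℝ] V} (hw : w ∈ W) :
    ∃ l, IsReducedWord l ∧ word l = w := by
  obtain ⟨l, rfl⟩ := exists_word_eq_of_mem_W hw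
  exact exists_isReducedWord_word_eq l

lemma IsReducedWord.concat_or {l : List (Fin 3)} (hl : IsReducedWord l) (k : Fin 3) :
    IsReducedWord (l ++ [k]) ∨ ∃ l', l = l' ++ [k] := by
  rcases List.eq_nil_or_concat' l with rfl | ⟨l', c, rfl⟩
  · exact .inl (.singleton k)
  · by_cases hc : c = k
    · exact .inr ⟨l', by rw [hc]⟩
    · exact .inl (hl.append (.singleton k) (by simpa using hc))

lemma word_concat_apply_α_self (l : List (Fin 3)) (k : Fin 3) :
    word (l ++ [k]) (α k) = -word l (α k) := by
  simp [word_append]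

lemma mem_nnspan_Δ_iff {x : V} : x ∈ nnspan Δ ↔ ∀ p, 0 ≤ x p := by
  refine ⟨fun hx => ?_, fun hx => ?_⟩
  · induction hx using Submodule.span_induction with
    | mem x hx =>
      obtain ⟨i, rfl⟩ := hx
      intro p
      by_cases hp : p = i <;> simp [α, hp]
    | zero => simp
    | add x y _ _ hx hy => exact fun p => add_nonneg (hx p) (hy p)
    | smul c x _ hx => exact fun p => mul_nonneg c.2 (hx p)
  · rw [← Finset.univ_sum_single x]
    refine Submodule.sum_mem _ fun p _ => ?_
    have : Pi.single p (x p) = (⟨x p, hx p⟩ : ℝ≥0) • α p := by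
      simp [α, ← Pi.single_smul]
    exact this ▸ Submodule.smul_mem _ _ (Submodule.subset_span ⟨p, rfl⟩)

lemma apply_mem_Φ {w : V ≃ₗ[ℝ] V} (hw : w ∈ W) {x : V} (hx : x ∈ Φ) : w x ∈ Φ := by
  obtain ⟨w', hw', i, rfl⟩ := hx
  exact ⟨w * w', mul_mem hw hw', i, rfl⟩

lemma α_mem_Φ (i : Fin 3) : α i ∈ Φ := ⟨1, one_mem W, i, rfl⟩

/-- `q` is the only index with `⟨α_q, x⟩ > 0`, in the quantitative form that `sRefl` preserves. -/
def HasUniqueDescent (q : Fin 3) (x : V) : Prop :=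
  1 ≤ B (α q) x ∧ ∀ p, p ≠ q → B (α p) x + B (α q) x ≤ 0

namespace HasUniqueDescent

variable {p q i : Fin 3} {x : V}

lemma B_le (h : HasUniqueDescent q x) (hp : p ≠ q) : B (α p) x ≤ -1 := by
  linarith [h.1, h.2 p hp]

lemma unique {q' : Fin 3} (h : HasUniqueDescent q x) (h' : HasUniqueDescent q' x) : q = q' := by
  by_contra hne
  linarith [h.1, h'.B_le hne]

lemma sRefl (h : HasUniqueDescent q x) (hi : i ≠ q) : HasUniqueDescent i (sRefl i x) := by
  have hBi := h.B_le hi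
  refine ⟨by rw [B_sRefl, B_α_self]; linarith, fun p hp => ?_⟩
  rw [B_sRefl, B_sRefl, B_α_self, B_α_of_ne hp]
  rcases eq_or_ne p q with rfl | hpq
  · linarith [h.2 i hi]
  · linarith [h.B_le hpq]

end HasUniqueDescent

lemma hasUniqueDescent_α (j : Fin 3) : HasUniqueDescent j (α j) :=
  ⟨(B_α_self j).ge, fun p hp => by rw [B_α_of_ne hp, B_α_self]; norm_num⟩

section ReducedWord

variable {l : List (Fin 3)} {i j p : Fin 3}

lemma IsReducedWord.ne_headD {t : List (Fin 3)} (h : IsReducedWord (i :: t ++ [j])) :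
    i ≠ t.headD j :=
  (List.isChain_cons.1 h).1 _ (by cases t <;> simp)

lemma IsReducedWord.last_ne {e : Fin 3} (h : IsReducedWord (l ++ [e] ++ [j])) : e ≠ j :=
  (List.isChain_append.1 h).2.2 e (by simp) j (by simp)

lemma IsReducedWord.eq_nil_of_forall_mem_eq (h : IsReducedWord (l ++ [j]))
    (hl : ∀ q ∈ l ++ [j], q = p) : l = [] := by
  rcases List.eq_nil_or_concat' l with rfl | ⟨l', c, rfl⟩
  · rfl
  · exact absurd ((hl c (by simp)).trans (hl j (by simp)).symm)
      ((List.isChain_append.1 h).2.2 c (by simp) j (by simp))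

lemma hasUniqueDescent_word (h : IsReducedWord (l ++ [j])) :
    HasUniqueDescent (l.headD j) (word l (α j)) := by
  induction l with
  | nil => exact hasUniqueDescent_α j
  | cons i t ih => exact (ih h.tail).sRefl h.ne_headD

lemma word_apply_α_of_notMem (hp : p ∉ l ++ [j]) : word l (α j) p = 0 := by
  rw [List.mem_append, List.mem_singleton, not_or] at hp
  rw [word_apply_of_notMem hp.1, α_apply_of_ne hp.2]

lemma one_le_word_apply_α (h : IsReducedWord (l ++ [j])) (hp : p ∈ l ++ [j]) :
    1 ≤ word l (α j) p := by
  induction l generalizing p with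
  | nil => simp_all [α]
  | cons i t ih =>
    have hi : 0 ≤ word t (α j) i := by
      by_cases hit : i ∈ t ++ [j]
      · linarith [ih h.tail hit]
      · rw [word_apply_α_of_notMem hit]
    rw [word_cons, LinearEquiv.mul_apply]
    rcases eq_or_ne p i with rfl | hpi
    · rw [sRefl_apply_self]
      linarith [(hasUniqueDescent_word h.tail).B_le h.ne_headD]
    · rw [sRefl_apply_of_ne hpi]
      exact ih h.tail (by simpa [hpi] using hp)

lemma word_apply_α_nonneg (h : IsReducedWord (l ++ [j])) (p : Fin 3) : 0 ≤ word l (α j) p := by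
  by_cases hp : p ∈ l ++ [j]
  · linarith [one_le_word_apply_α h hp]
  · rw [word_apply_α_of_notMem hp]

lemma word_cons_apply_α_ne_α {t : List (Fin 3)} {k : Fin 3} (h : IsReducedWord (i :: t ++ [k])) :
    word (i :: t) (α k) ≠ α j := by
  intro he
  obtain rfl : i = j := (hasUniqueDescent_word h).unique (he ▸ hasUniqueDescent_α j)
  have ht : word t (α k) = -α i := by simpa using congrArg (sRefl i) he
  have := word_apply_α_nonneg h.tail i
  rw [ht] at this
  norm_num [α] at this

lemma eq_of_word_apply_α_eq {l' : List (Fin 3)} {j' : Fin 3} (h : IsReducedWord (l ++ [j]))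
    (h' : IsReducedWord (l' ++ [j'])) (he : word l (α j) = word l' (α j')) : l = l' ∧ j = j' := by
  induction l generalizing l' with
  | nil =>
    cases l' with
    | nil =>
      have he : α j = α j' := he
      exact ⟨rfl, (hasUniqueDescent_α j).unique (he ▸ hasUniqueDescent_α j')⟩
    | cons i' t' => exact absurd he.symm (word_cons_apply_α_ne_α h')
  | cons i t ih =>
    cases l' with
    | nil => exact absurd he (word_cons_apply_α_ne_α h)
    | cons i' t' =>
      obtain rfl : i = i' := (hasUniqueDescent_word h).unique (he ▸ hasUniqueDescent_word h')
      have ht : word t (α j) = word t' (α j') := by simpa using congrArg (sRefl i) he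
      obtain ⟨rfl, rfl⟩ := ih h.tail h'.tail ht
      exact ⟨rfl, rfl⟩

lemma word_apply_α_mem_Φpos (h : IsReducedWord (l ++ [j])) : word l (α j) ∈ Φpos :=
  ⟨apply_mem_Φ (word_mem_W l) (α_mem_Φ j), mem_nnspan_Δ_iff.2 (word_apply_α_nonneg h)⟩

lemma neg_word_apply_α_notMem_Φpos (h : IsReducedWord (l ++ [j])) : -word l (α j) ∉ Φpos := by
  intro hneg
  have := mem_nnspan_Δ_iff.1 hneg.2 j
  rw [Pi.neg_apply] at this
  linarith [one_le_word_apply_α h (List.mem_append_right l (List.mem_singleton_self j))]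

lemma exists_isReducedWord_of_mem_Φ {x : V} (hx : x ∈ Φ) :
    ∃ l j, IsReducedWord (l ++ [j]) ∧ (x = word l (α j) ∨ x = -word l (α j)) := by
  obtain ⟨w, hw, k, rfl⟩ := hx
  obtain ⟨m, hm, rfl⟩ := exists_isReducedWord_word_eq_of_mem_W hw
  rcases hm.concat_or k with hmk | ⟨m', rfl⟩
  · exact ⟨m, k, hmk, .inl rfl⟩
  · exact ⟨m', k, hm, .inr (word_concat_apply_α_self m' k)⟩

lemma exists_isReducedWord_of_mem_Φpos {x : V} (hx : x ∈ Φpos) :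
    ∃ l j, IsReducedWord (l ++ [j]) ∧ x = word l (α j) := by
  obtain ⟨l, j, h, rfl | rfl⟩ := exists_isReducedWord_of_mem_Φ hx.1
  · exact ⟨l, j, h, rfl⟩
  · exact absurd hx (neg_word_apply_α_notMem_Φpos h)

lemma exists_isReducedWord_of_mem_Φ_of_apply_eq_zero {x : V} (hx : x ∈ Φ) (hp : x p = 0) :
    ∃ l j, IsReducedWord (l ++ [j]) ∧ p ∉ l ++ [j] ∧ (x = word l (α j) ∨ x = -word l (α j)) := by
  obtain ⟨l, j, h, hx'⟩ := exists_isReducedWord_of_mem_Φ hx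
  refine ⟨l, j, h, fun hpl => ?_, hx'⟩
  have := one_le_word_apply_α h hpl
  rcases hx' with rfl | rfl
  · linarith
  · rw [Pi.neg_apply, neg_eq_zero] at hp
    linarith

end ReducedWord

lemma fin_three_eq_or_eq_or_eq :
    ∀ i j r p : Fin 3, i ≠ j → r ≠ i → r ≠ j → p = i ∨ p = j ∨ p = r := by
  decide

lemma exists_ne_and_ne : ∀ i j : Fin 3, ∃ r, r ≠ i ∧ r ≠ j := by decide

lemma exists_distinct_pair_ne : ∀ r : Fin 3, ∃ i j, i ≠ j ∧ r ≠ i ∧ r ≠ j := by decide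

lemma smul_α_add_smul_α_eq {i j r : Fin 3} (hij : i ≠ j) (hri : r ≠ i) (hrj : r ≠ j) {x : V}
    (hx : x r = 0) : x i • α i + x j • α j = x := by
  ext p
  rcases fin_three_eq_or_eq_or_eq i j r p hij hri hrj with rfl | rfl | rfl
  · simp [α, hij]
  · simp [α, Ne.symm hij]
  · simp [α, hri, hrj, hx]

lemma span_α_pair_eq {i j r : Fin 3} (hij : i ≠ j) (hri : r ≠ i) (hrj : r ≠ j) :
    (Submodule.span ℝ {α i, α j} : Set V) = {x | x r = 0} := by
  ext x
  simp only [SetLike.mem_coe, Submodule.mem_span_pair, Set.mem_ofPred_eq]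
  constructor
  · rintro ⟨a, b, rfl⟩
    simp [α_apply_of_ne hri, α_apply_of_ne hrj]
  · exact fun hx => ⟨x i, x j, smul_α_add_smul_α_eq hij hri hrj hx⟩

/-- The rank-2 parabolic subsystem `w·(Span{αᵢ, αⱼ} ∩ Φ)`, indexed by the third index `r`:
`Span{αᵢ, αⱼ}` is the coordinate plane `{x | x r = 0}`. -/
def parabolicAt (w : V ≃ₗ[ℝ] V) (r : Fin 3) : Set V := {y | y ∈ Φ ∧ w⁻¹ y r = 0}

section Parabolic

variable {w : V ≃ₗ[ℝ] V} {r : Fin 3}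

lemma apply_mem_parabolicAt (hw : w ∈ W) {x : V} (hx : x ∈ Φ) (hxr : x r = 0) :
    w x ∈ parabolicAt w r :=
  ⟨apply_mem_Φ hw hx, by simpa using hxr⟩

lemma image_eq_parabolicAt (hw : w ∈ W) (r : Fin 3) :
    (fun x => w x) '' ({x : V | x r = 0} ∩ Φ) = parabolicAt w r := by
  ext y
  constructor
  · rintro ⟨x, ⟨hxr, hx⟩, rfl⟩
    exact apply_mem_parabolicAt hw hx hxr
  · rintro ⟨hy, hyr⟩
    exact ⟨w⁻¹ y, ⟨hyr, apply_mem_Φ (inv_mem hw) hy⟩, by simp⟩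

lemma isRank2Parabolic_iff {P : Set V} :
    IsRank2Parabolic P ↔ ∃ w ∈ W, ∃ r, P = parabolicAt w r := by
  constructor
  · rintro ⟨w, hw, i, j, hij, rfl⟩
    obtain ⟨r, hri, hrj⟩ := exists_ne_and_ne i j
    exact ⟨w, hw, r, by rw [span_α_pair_eq hij hri hrj, image_eq_parabolicAt hw]⟩
  · rintro ⟨w, hw, r, rfl⟩
    obtain ⟨i, j, hij, hri, hrj⟩ := exists_distinct_pair_ne r
    exact ⟨w, hw, i, j, hij, by rw [span_α_pair_eq hij hri hrj, image_eq_parabolicAt hw]⟩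

lemma parabolicAt_mul_word (w : V ≃ₗ[ℝ] V) {t : List (Fin 3)} (hr : r ∉ t) :
    parabolicAt (w * word t) r = parabolicAt w r := by
  ext y
  simp only [parabolicAt, Set.mem_ofPred_eq, mul_inv_rev, LinearEquiv.mul_apply,
    inv_word_apply_of_notMem hr]

lemma parabolicAt_ne (hw : w ∈ W) {r' : Fin 3} (h : r ≠ r') :
    parabolicAt w r ≠ parabolicAt w r' := by
  intro he
  have := (he ▸ apply_mem_parabolicAt hw (α_mem_Φ r') (α_apply_of_ne h)).2
  simp [α] at this

end Parabolic

lemma exists_eq_parabolicAt_of_word_apply_α_mem {l : List (Fin 3)} {j : Fin 3}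
    (h : IsReducedWord (l ++ [j])) {P : Set V} (hP : IsRank2Parabolic P)
    (hβ : word l (α j) ∈ P) : ∃ r, r ≠ j ∧ P = parabolicAt (word l) r := by
  obtain ⟨w, hw, r, rfl⟩ := isRank2Parabolic_iff.1 hP
  obtain ⟨m₀, rfl⟩ := exists_word_eq_of_mem_W hw
  obtain ⟨n, k, hnk, hr, hγn⟩ :=
    exists_isReducedWord_of_mem_Φ_of_apply_eq_zero (apply_mem_Φ (inv_mem hw) hβ.1) hβ.2
  obtain ⟨n', hn', hγn'⟩ : ∃ n', r ∉ n' ∧ (word m₀)⁻¹ (word l (α j)) = word n' (α k) := by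
    rcases hγn with hγn | hγn
    · exact ⟨n, fun hmem => hr (List.mem_append_left _ hmem), hγn⟩
    · exact ⟨n ++ [k], hr, by rw [hγn, word_concat_apply_α_self]⟩
  -- `word (m₀ ++ n')` gives the same parabolic as `word m₀` and sends `αₖ` to `β`
  obtain ⟨m, hm, hmeq⟩ := exists_isReducedWord_word_eq (m₀ ++ n')
  have hβm : word m (α k) = word l (α j) := by
    rw [hmeq, word_append, LinearEquiv.mul_apply, ← hγn']
    simp
  have hmk : IsReducedWord (m ++ [k]) := by
    rcases hm.concat_or k with hmk | ⟨m', rfl⟩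
    · exact hmk
    · refine absurd (hβm ▸ word_apply_α_mem_Φpos h) ?_
      rw [word_concat_apply_α_self]
      exact neg_word_apply_α_notMem_Φpos hm
  obtain ⟨rfl, rfl⟩ := eq_of_word_apply_α_eq hmk h hβm
  refine ⟨r, fun hrk => hr (hrk ▸ List.mem_append_right _ (List.mem_singleton_self _)), ?_⟩
  rw [hmeq, word_append, parabolicAt_mul_word _ hn']

lemma eq_zero_of_mem_span_nnreal_of_pos {M : Type*} [AddCommGroup M] [Module ℝ M]
    (f : M →ₗ[ℝ] ℝ) {s : Set M} (hs : ∀ x ∈ s, 0 < f x) {x : M}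
    (hx : x ∈ Submodule.span ℝ≥0 s) (hfx : f x = 0) : x = 0 := by
  have key : ∀ y ∈ Submodule.span ℝ≥0 s, y = 0 ∨ 0 < f y := fun y hy => by
    induction hy using Submodule.span_induction with
    | mem y hy => exact .inr (hs y hy)
    | zero => exact .inl rfl
    | add y z _ _ hy hz =>
      rcases hy with rfl | hy
      · simpa using hz
      rcases hz with rfl | hz
      · simpa using Or.inr hy
      exact .inr (by rw [map_add]; positivity)
    | smul c y _ hy =>
      rcases eq_or_ne c 0 with rfl | hc
      · exact .inl (zero_smul _ y)
      rcases hy with rfl | hy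
      · exact .inl (smul_zero c)
      right
      rw [← algebraMap_smul ℝ c y, map_smul, smul_eq_mul]
      exact mul_pos (by simpa [pos_iff_ne_zero] using hc) hy
  exact (key x hx).resolve_right (by rw [hfx]; exact lt_irrefl 0)

lemma smul_mem_nnspan {X : Set V} {c : ℝ} (hc : 0 ≤ c) {x : V} (hx : x ∈ X) :
    c • x ∈ nnspan X :=
  Submodule.smul_mem _ (⟨c, hc⟩ : ℝ≥0) (Submodule.subset_span hx)

lemma exists_word_eq_of_mem_parabolicAt_last {l : List (Fin 3)} {e : Fin 3}
    (h : IsReducedWord (l ++ [e])) {δ : V} (hδ : δ ∈ parabolicAt (word (l ++ [e])) e)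
    (hδpos : δ ∈ Φpos) :
    ∃ n k, IsReducedWord (n ++ [k]) ∧ e ∉ n ++ [k] ∧ (word (l ++ [e]))⁻¹ δ = word n (α k) := by
  obtain ⟨n, k, hnk, he, hγ⟩ :=
    exists_isReducedWord_of_mem_Φ_of_apply_eq_zero (apply_mem_Φ (inv_mem (word_mem_W _)) hδ.1) hδ.2
  refine ⟨n, k, hnk, he, hγ.resolve_right fun hneg => ?_⟩
  have hred : IsReducedWord ((l ++ [e] ++ n) ++ [k]) := by
    rw [List.append_assoc]
    refine h.append hnk fun x hx y hy => ?_
    obtain rfl : x = e := by simpa using hx.symm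
    exact fun hxy => he (hxy ▸ List.mem_of_mem_head? hy)
  refine neg_word_apply_α_notMem_Φpos hred ?_
  rwa [word_append, LinearEquiv.mul_apply, ← map_neg, ← hneg, ← LinearEquiv.mul_apply,
    mul_inv_cancel, LinearEquiv.coe_one, id]

lemma isRelativelySimple_parabolicAt_last {l : List (Fin 3)} {e j : Fin 3}
    (h : IsReducedWord (l ++ [e] ++ [j])) :
    IsRelativelySimple (parabolicAt (word (l ++ [e])) e) (word (l ++ [e]) (α j)) := by
  set w := word (l ++ [e])
  have hej := h.last_ne
  obtain ⟨a, hae, haj⟩ := exists_ne_and_ne e j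
  refine ⟨⟨apply_mem_parabolicAt (word_mem_W _) (α_mem_Φ j) (α_apply_of_ne hej),
    word_apply_α_mem_Φpos h⟩, fun hspan => ?_⟩
  let f : V →ₗ[ℝ] ℝ := LinearMap.proj a ∘ₗ (w⁻¹ : V ≃ₗ[ℝ] V).toLinearMap
  have hpos : ∀ δ ∈ (parabolicAt w e ∩ Φpos) \ {w (α j)}, 0 < f δ := by
    rintro δ ⟨⟨hδ, hδpos⟩, hδβ⟩
    obtain ⟨n, k, hnk, hen, hγ⟩ :=
      exists_word_eq_of_mem_parabolicAt_last h.left_of_append hδ hδpos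
    have han : a ∈ n ++ [k] := by
      by_contra han
      have hj : ∀ q ∈ n ++ [k], q = j := fun q hq => by
        rcases fin_three_eq_or_eq_or_eq e j a q hej hae haj with rfl | rfl | rfl
        exacts [absurd hq hen, rfl, absurd hq han]
      obtain rfl := hnk.eq_nil_of_forall_mem_eq hj
      obtain rfl : k = j := hj k (by simp)
      refine hδβ ?_
      rw [Set.mem_singleton_iff, ← w.apply_symm_apply δ, ← LinearEquiv.coe_inv, hγ]
      rfl
    show 0 < w⁻¹ δ a
    rw [hγ]
    linarith [one_le_word_apply_α hnk han]
  have hβ := eq_zero_of_mem_span_nnreal_of_pos f hpos hspan (by simp [f, w, α_apply_of_ne haj])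
  simp [α] at hβ

lemma IsReducedWord.exists_dihedral_suffix {l : List (Fin 3)} {e j : Fin 3}
    (h : IsReducedWord (l ++ [e] ++ [j])) :
    ∃ l₀ t, l₀ ++ t = l ++ [e] ∧ e ∈ t ∧ (∀ x ∈ t, x = j ∨ x = e) ∧
      IsReducedWord (t ++ [j]) ∧ ∀ m, m = j ∨ m = e → IsReducedWord (l₀ ++ [m]) := by
  let q : Fin 3 → Bool := fun x => decide (x = j ∨ x = e)
  have hL : (l ++ [e]).rdropWhile q ++ (l ++ [e]).rtakeWhile q = l ++ [e] :=
    List.rdropWhile_append_rtakeWhile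
  have h' : IsReducedWord ((l ++ [e]).rdropWhile q ++ ((l ++ [e]).rtakeWhile q ++ [j])) := by
    rwa [← List.append_assoc, hL]
  refine ⟨_, _, hL, by simp [List.rtakeWhile_concat_pos, q], fun x hx => ?_, h'.right_of_append,
    fun m hm => h'.left_of_append.append (.singleton m) fun g hg y hy => ?_⟩
  · simpa [q] using List.mem_rtakeWhile_imp hx
  · obtain ⟨hne, rfl⟩ := List.mem_getLast?_eq_getLast hg
    obtain rfl : y = m := by simpa using hy.symm
    have := List.rdropWhile_last_not q (l ++ [e]) hne
    simp only [q, decide_eq_true_eq] at this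
    rintro rfl
    tauto

lemma not_isRelativelySimple_parabolicAt {l : List (Fin 3)} {e j a : Fin 3}
    (h : IsReducedWord (l ++ [e] ++ [j])) (hae : a ≠ e) (haj : a ≠ j) :
    ¬ IsRelativelySimple (parabolicAt (word (l ++ [e])) a) (word (l ++ [e]) (α j)) := by
  rintro ⟨-, hns⟩
  apply hns
  have hej := h.last_ne
  obtain ⟨l₀, t, hL, het, ht, hredt, hred₀⟩ := h.exists_dihedral_suffix
  have hat : a ∉ t := fun hat => by rcases ht a hat with rfl | rfl <;> contradiction
  set ζ := word t (α j)
  have hζ : ζ j • α j + ζ e • α e = ζ :=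
    smul_α_add_smul_α_eq (Ne.symm hej) haj hae
      (word_apply_α_of_notMem (by simpa [haj] using hat))
  have hζj : 1 ≤ ζ j := one_le_word_apply_α hredt (by simp)
  have hζe : 1 ≤ ζ e := one_le_word_apply_α hredt (by simp [het])
  have hβ : word (l ++ [e]) (α j) = word l₀ ζ := by rw [← hL, word_append]; rfl
  have hmem : ∀ m, m = j ∨ m = e → word l₀ (α m) ∈
      (parabolicAt (word (l ++ [e])) a ∩ Φpos) \ {word (l ++ [e]) (α j)} := by
    intro m hm
    refine ⟨⟨?_, word_apply_α_mem_Φpos (hred₀ m hm)⟩, fun heq => ?_⟩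
    · rw [← hL, word_append, parabolicAt_mul_word _ hat]
      exact apply_mem_parabolicAt (word_mem_W l₀) (α_mem_Φ m)
        (α_apply_of_ne (by rcases hm with rfl | rfl <;> assumption))
    · have hmζ : α m = ζ := (word l₀).injective (heq.trans hβ)
      rcases hm with rfl | rfl
      · linarith [show ζ e = 0 by rw [← hmζ, α_apply_of_ne hej]]
      · linarith [show ζ j = 0 by rw [← hmζ, α_apply_of_ne (Ne.symm hej)]]
  have hβζ : ζ j • word l₀ (α j) + ζ e • word l₀ (α e) = word (l ++ [e]) (α j) := by
    rw [hβ, ← map_smul, ← map_smul, ← map_add, hζ]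
  have := Submodule.add_mem _ (smul_mem_nnspan (zero_le_one.trans hζj) (hmem j (.inl rfl)))
    (smul_mem_nnspan (zero_le_one.trans hζe) (hmem e (.inr rfl)))
  rwa [hβζ] at this

/-- Every positive root lies in exactly two rank-2 parabolic subsystems of `Φ`;
if it is not simple, it is relatively simple in exactly one of the two. -/
theorem positive_root_in_two_parabolics (β : V) (hβ : β ∈ Φpos) :
    ∃ P₁ P₂ : Set V, P₁ ≠ P₂ ∧
      IsRank2Parabolic P₁ ∧ IsRank2Parabolic P₂ ∧ β ∈ P₁ ∧ β ∈ P₂ ∧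
      (∀ P : Set V, IsRank2Parabolic P → β ∈ P → P = P₁ ∨ P = P₂) ∧
      (β ∉ Δ → Xor' (IsRelativelySimple P₁ β) (IsRelativelySimple P₂ β)) := by
  obtain ⟨l, j, hred, rfl⟩ := exists_isReducedWord_of_mem_Φpos hβ
  obtain ⟨e, hej, hl⟩ : ∃ e, e ≠ j ∧ (l = [] ∨ ∃ l', l = l' ++ [e]) := by
    rcases List.eq_nil_or_concat' l with rfl | ⟨l', e, rfl⟩
    · obtain ⟨e, hej, -⟩ := exists_ne_and_ne j j
      exact ⟨e, hej, .inl rfl⟩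
    · exact ⟨e, IsReducedWord.last_ne hred, .inr ⟨l', rfl⟩⟩
  obtain ⟨a, hae, haj⟩ := exists_ne_and_ne e j
  have hw := word_mem_W l
  refine ⟨parabolicAt (word l) e, parabolicAt (word l) a, parabolicAt_ne hw (Ne.symm hae),
    isRank2Parabolic_iff.2 ⟨_, hw, e, rfl⟩, isRank2Parabolic_iff.2 ⟨_, hw, a, rfl⟩,
    apply_mem_parabolicAt hw (α_mem_Φ j) (α_apply_of_ne hej),
    apply_mem_parabolicAt hw (α_mem_Φ j) (α_apply_of_ne haj), fun P hP hβP => ?_, fun hΔ => ?_⟩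
  · obtain ⟨r, hrj, rfl⟩ := exists_eq_parabolicAt_of_word_apply_α_mem hred hP hβP
    rcases fin_three_eq_or_eq_or_eq e j a r hej hae haj with rfl | rfl | rfl
    exacts [.inl rfl, absurd rfl hrj, .inr rfl]
  · rcases hl with rfl | ⟨l', rfl⟩
    · exact absurd ⟨j, rfl⟩ hΔ
    · exact .inl ⟨isRelativelySimple_parabolicAt_last hred,
        not_isRelativelySimple_parabolicAt hred hae haj⟩
end
end

section
/- For every w ∈ W with w ≠ id, the inversion set Inv(w) is a complete join-irreducible of the extended weak order: there exists a biclosed set R* ⊊ Inv(w) such that every biclosed set R' ⊊ Inv(w) satisfies R' ⊆ R*. -/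
open scoped NNReal

noncomputable section

/-- The inversion set `Inv(w) = Φ⁺ ∩ w·Φ⁻`, where `Φ⁻ = -Φ⁺`. -/
def Inversions (w : V ≃ₗ[ℝ] V) : Set V := Φpos ∩ (fun y => w y) '' (-Φpos)

/-!
Write `w ≠ 1` as a reduced word `c ++ [y]` (no letter repeated consecutively). Then
`Inv(w) = Inv(ofWord c) ∪ {ofWord c (α y)}`, and `R* = Inv(ofWord c)` is the required set.
Both this and the dichotomy `Φ = Φ⁺ ∪ -Φ⁺` rest on positivity of `ofWord c (α y)` for reduced
`c ++ [y]`, a ping-pong argument: for `y ≠ x`, `σ y` maps the cone spanned by the `αᵢ + αₓ`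
into the cone spanned by the `αᵢ + α_y`.

The heart is that a biclosed `R ⊆ Inv(w)` containing the last inversion `β_m` contains all the
`β_j`. Take a maximal block of missing inversions ending just before a present `β_{m₀}`, and the
longest stretch ending at `m₀` on which the word alternates between two letters; along it the
`β_j` form an arithmetic progression. If the block starts inside the stretch, its first element
is a positive combination of two present inversions, contradicting closedness; otherwise `β_{m₀}`
is a positive combination of a missing inversion and a positive root that is no inversion,
contradicting coclosedness.
-/

theorem eq_add_nsmul_of_sub_eq_sub {M : Type*} [AddCommGroup M] {f : ℕ → M} {N : ℕ}
    (h : ∀ n, n + 2 ≤ N → f (n + 2) - f (n + 1) = f (n + 1) - f n) {n : ℕ} (hn : n ≤ N) :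
    f n = f 0 + n • (f 1 - f 0) := by
  have hstep : ∀ n, n + 1 ≤ N → f (n + 1) - f n = f 1 - f 0 := by
    intro n hn
    induction n with
    | zero => rfl
    | succ n ih => rw [h n hn, ih (by omega)]
  induction n with
  | zero => simp
  | succ n ih => rw [succ_nsmul, ← add_assoc, ← ih (by omega), ← hstep n hn]; abel

theorem exists_first_gap {P : ℕ → Prop} {a b : ℕ} (ha : ¬P a) (hb : P b) (hab : a ≤ b) :
    ∃ i l, i < l ∧ l ≤ b ∧ P l ∧ (∀ t < i, P t) ∧ ∀ t, i ≤ t → t < l → ¬P t := by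
  classical
  have hfail : ∃ n, ¬P n := ⟨a, ha⟩
  set i := Nat.find hfail
  have hi : ¬P i := Nat.find_spec hfail
  have hib : i < b := lt_of_le_of_ne ((Nat.find_min' hfail ha).trans hab) fun h => hi (h ▸ hb)
  have hnext : ∃ l, i < l ∧ P l := ⟨b, hib, hb⟩
  refine ⟨i, Nat.find hnext, (Nat.find_spec hnext).1, Nat.find_min' hnext ⟨hib, hb⟩,
    (Nat.find_spec hnext).2, fun t ht => not_not.mp (Nat.find_min hfail ht), fun t hit htl => ?_⟩
  rcases hit.eq_or_lt with rfl | hit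
  · exact hi
  · exact fun htP => Nat.find_min hnext htl ⟨hit, htP⟩

namespace U3

lemma B_α_left (i : Fin 3) (x : V) : B (α i) x = 2 * x i - ∑ j, x j := by
  simp [B, α, Pi.single_apply]

def coroot (i : Fin 3) : Module.Dual ℝ V where
  toFun x := 2 * B (α i) x
  map_add' x y := by simp only [B_α_left, Pi.add_apply, Finset.sum_add_distrib]; ring
  map_smul' c x := by
    simp only [B_α_left, Pi.smul_apply, smul_eq_mul, ← Finset.mul_sum, RingHom.id_apply]; ring

lemma coroot_apply_α (i j : Fin 3) : coroot i (α j) = if i = j then 2 else -2 := by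
  change 2 * B (α i) (α j) = _
  rw [B_α_left]
  fin_cases i <;> fin_cases j <;> simp [α] <;> norm_num

def σ (i : Fin 3) : V ≃ₗ[ℝ] V :=
  Module.reflection (by simpa using coroot_apply_α i i)

lemma σ_apply (i : Fin 3) (x : V) : σ i x = x - (2 * B (α i) x) • α i :=
  Module.reflection_apply x _

lemma isSimpleReflection_σ (i : Fin 3) : IsSimpleReflection (σ i) := ⟨i, σ_apply i⟩

lemma σ_mem_W (i : Fin 3) : σ i ∈ W := Subgroup.subset_closure (isSimpleReflection_σ i)

lemma exists_eq_σ {f : V ≃ₗ[ℝ] V} (hf : IsSimpleReflection f) : ∃ i, f = σ i := by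
  obtain ⟨i, hi⟩ := hf
  exact ⟨i, LinearEquiv.ext fun x => (hi x).trans (σ_apply i x).symm⟩

@[simp] lemma σ_inv (i : Fin 3) : (σ i)⁻¹ = σ i := rfl

@[simp] lemma σ_mul_self (i : Fin 3) : σ i * σ i = 1 := by
  simpa using mul_inv_cancel (σ i)

@[simp] lemma σ_apply_σ_apply (i : Fin 3) (x : V) : σ i (σ i x) = x :=
  Module.involutive_reflection _ x

@[simp] lemma σ_apply_α_self (i : Fin 3) : σ i (α i) = -α i := Module.reflection_apply_self _

lemma σ_apply_α_of_ne {i j : Fin 3} (h : i ≠ j) : σ i (α j) = α j + (2 : ℝ) • α i := by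
  rw [σ, Module.reflection_apply, coroot_apply_α, if_neg h]; module

def ofWord (l : List (Fin 3)) : V ≃ₗ[ℝ] V := (l.map σ).prod

abbrev IsReduced (l : List (Fin 3)) : Prop := l.IsChain (· ≠ ·)

@[simp] lemma ofWord_nil : ofWord [] = 1 := rfl

@[simp] lemma ofWord_cons (i : Fin 3) (l : List (Fin 3)) : ofWord (i :: l) = σ i * ofWord l :=
  List.prod_cons

@[simp] lemma ofWord_append (l₁ l₂ : List (Fin 3)) :
    ofWord (l₁ ++ l₂) = ofWord l₁ * ofWord l₂ := by
  simp [ofWord]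

lemma ofWord_append_singleton_apply (l : List (Fin 3)) (y : Fin 3) (v : V) :
    ofWord (l ++ [y]) v = ofWord l (σ y v) := by
  simp

lemma ofWord_symm (l : List (Fin 3)) : (ofWord l).symm = ofWord l.reverse := by
  change (ofWord l)⁻¹ = _
  simp [ofWord, List.prod_inv_reverse, List.map_reverse, Function.comp_def]

lemma ofWord_mem_W (l : List (Fin 3)) : ofWord l ∈ W :=
  Subgroup.list_prod_mem W (by simp [σ_mem_W])

lemma IsReduced.reverse {l : List (Fin 3)} (h : IsReduced l) : IsReduced l.reverse :=
  List.isChain_reverse.mpr (h.imp fun _ _ => Ne.symm)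

lemma isReduced_append_singleton_append_singleton {l : List (Fin 3)} {x y : Fin 3} :
    IsReduced (l ++ [y] ++ [x]) ↔ IsReduced (l ++ [y]) ∧ y ≠ x := by
  unfold IsReduced
  rw [List.append_assoc, List.singleton_append, List.isChain_split, List.isChain_pair]

lemma exists_isReduced_ofWord_eq (l : List (Fin 3)) :
    ∃ c, IsReduced c ∧ ofWord c = ofWord l := by
  induction l with
  | nil => exact ⟨[], List.isChain_nil, rfl⟩
  | cons a l ih =>
    obtain ⟨c, hc, hcl⟩ := ih
    rcases c with _ | ⟨b, c⟩
    · exact ⟨[a], List.isChain_singleton a, by simp [← hcl]⟩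
    by_cases hab : a = b
    · subst hab
      exact ⟨c, hc.tail, by simp [← hcl, ← mul_assoc]⟩
    · exact ⟨a :: b :: c, List.isChain_cons_cons.mpr ⟨hab, hc⟩, by simp [← hcl]⟩

lemma exists_isReduced_of_mem_W {w : V ≃ₗ[ℝ] V} (hw : w ∈ W) :
    ∃ c, IsReduced c ∧ ofWord c = w := by
  obtain ⟨l, rfl⟩ : ∃ l, ofWord l = w := by
    induction hw using Subgroup.closure_induction with
    | mem f hf =>
      obtain ⟨i, rfl⟩ := exists_eq_σ hf
      exact ⟨[i], by simp⟩
    | one => exact ⟨[], rfl⟩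
    | mul f g _ _ hf hg =>
      obtain ⟨l₁, rfl⟩ := hf
      obtain ⟨l₂, rfl⟩ := hg
      exact ⟨l₁ ++ l₂, ofWord_append l₁ l₂⟩
    | inv f _ hf =>
      obtain ⟨l, rfl⟩ := hf
      exact ⟨l.reverse, (ofWord_symm l).symm⟩
  exact exists_isReduced_ofWord_eq l

lemma α_nonneg (i : Fin 3) : 0 ≤ α i := Pi.single_nonneg.mpr zero_le_one

lemma α_ne_zero (i : Fin 3) : α i ≠ 0 := Pi.single_ne_zero_iff.mpr one_ne_zero

lemma nonneg_of_add_self_nonneg {v : V} (h : 0 ≤ v + v) : 0 ≤ v := fun j => by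
  have := h j
  simp only [Pi.zero_apply, Pi.add_apply] at this ⊢
  linarith

theorem ofWord_apply_α_add_α_nonneg {l : List (Fin 3)} {x : Fin 3} (h : IsReduced (l ++ [x]))
    (i : Fin 3) : 0 ≤ ofWord l (α i + α x) := by
  induction l using List.reverseRecOn generalizing x i with
  | nil => exact add_nonneg (α_nonneg i) (α_nonneg x)
  | append_singleton l y ih =>
    obtain ⟨hly, hyx⟩ := isReduced_append_singleton_append_singleton.mp h
    have hy : 0 ≤ ofWord l (α y) :=
      nonneg_of_add_self_nonneg (by simpa only [map_add] using ih hly y)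
    rw [ofWord_append_singleton_apply, map_add, σ_apply_α_of_ne hyx]
    by_cases hiy : i = y
    · subst hiy
      have hcone : -α i + (α x + (2 : ℝ) • α i) = α x + α i := by module
      simpa [hcone] using ih hly x
    · have hcone : σ y (α i) + (α x + (2 : ℝ) • α y) =
          (α i + α y) + (α x + α y) + (2 : ℝ) • α y := by
        rw [σ_apply_α_of_ne (Ne.symm hiy)]; module
      rw [hcone, map_add, map_add, map_smul]
      exact add_nonneg (add_nonneg (ih hly i) (ih hly x)) (smul_nonneg zero_le_two hy)

theorem ofWord_apply_α_nonneg {l : List (Fin 3)} {x : Fin 3} (h : IsReduced (l ++ [x])) :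
    0 ≤ ofWord l (α x) :=
  nonneg_of_add_self_nonneg (by simpa only [map_add] using ofWord_apply_α_add_α_nonneg h x)

lemma nonneg_of_mem_nnspan {X : Set V} (hX : ∀ v ∈ X, 0 ≤ v) {x : V} (hx : x ∈ nnspan X) :
    0 ≤ x := by
  induction hx using Submodule.span_induction with
  | mem v hv => exact hX v hv
  | zero => exact le_rfl
  | add u v _ _ hu hv => exact add_nonneg hu hv
  | smul s v _ hv => exact (NNReal.smul_def s v).symm ▸ smul_nonneg s.2 hv

lemma smul_add_smul_mem_nnspan_pair {a b : V} {s t : ℝ} (hs : 0 ≤ s) (ht : 0 ≤ t) :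
    s • a + t • b ∈ nnspan {a, b} :=
  Submodule.mem_span_pair.mpr ⟨⟨s, hs⟩, ⟨t, ht⟩, rfl⟩

lemma map_mem_nnspan_pair (f : V →ₗ[ℝ] V) {a b x : V} (hx : x ∈ nnspan {a, b}) :
    f x ∈ nnspan {f a, f b} := by
  obtain ⟨s, t, rfl⟩ := Submodule.mem_span_pair.mp hx
  exact Submodule.mem_span_pair.mpr ⟨s, t, by simp [LinearMap.map_smul_of_tower]⟩

lemma mem_nnspan_Δ_iff {v : V} : v ∈ nnspan Δ ↔ 0 ≤ v := by
  refine ⟨nonneg_of_mem_nnspan (by rintro _ ⟨i, rfl⟩; exact α_nonneg i), fun hv => ?_⟩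
  have hsum : v = ∑ i, (v i).toNNReal • α i := by
    ext j
    simpa [α, NNReal.smul_def, Pi.single_apply] using hv j
  rw [hsum]
  exact Submodule.sum_mem _ fun i _ => Submodule.smul_mem _ _ (Submodule.subset_span ⟨i, rfl⟩)

lemma mem_Φpos_iff_nonneg {x : V} : x ∈ Φpos ↔ x ∈ Φ ∧ 0 ≤ x := by
  rw [Φpos, Set.mem_inter_iff, mem_nnspan_Δ_iff]

lemma apply_mem_Φ {w : V ≃ₗ[ℝ] V} (hw : w ∈ W) {x : V} (hx : x ∈ Φ) : w x ∈ Φ := by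
  obtain ⟨u, hu, i, rfl⟩ := hx
  exact ⟨w * u, mul_mem hw hu, i, rfl⟩

lemma ofWord_apply_α_mem_Φ (l : List (Fin 3)) (i : Fin 3) : ofWord l (α i) ∈ Φ :=
  ⟨ofWord l, ofWord_mem_W l, i, rfl⟩

lemma neg_mem_Φ {x : V} (hx : x ∈ Φ) : -x ∈ Φ := by
  obtain ⟨w, hw, i, rfl⟩ := hx
  exact ⟨w * σ i, mul_mem hw (σ_mem_W i), i, by simp⟩

lemma ne_zero_of_mem_Φ {x : V} (hx : x ∈ Φ) : x ≠ 0 := by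
  obtain ⟨w, -, i, rfl⟩ := hx
  exact (map_ne_zero_iff w w.injective).mpr (α_ne_zero i)

lemma neg_notMem_Φpos {x : V} (hx : x ∈ Φpos) : -x ∉ Φpos := fun hnx => by
  rw [mem_Φpos_iff_nonneg] at hx hnx
  exact ne_zero_of_mem_Φ hx.1 (le_antisymm (neg_nonneg.mp hnx.2) hx.2)

lemma ofWord_apply_α_mem_Φpos {l : List (Fin 3)} {x : Fin 3} (h : IsReduced (l ++ [x])) :
    ofWord l (α x) ∈ Φpos :=
  mem_Φpos_iff_nonneg.mpr ⟨ofWord_apply_α_mem_Φ l x, ofWord_apply_α_nonneg h⟩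

lemma α_mem_Φpos (i : Fin 3) : α i ∈ Φpos :=
  ofWord_apply_α_mem_Φpos (l := []) (List.isChain_singleton i)

lemma exists_isReduced_of_mem_Φ {x : V} (hx : x ∈ Φ) :
    ∃ p i, IsReduced (p ++ [i]) ∧ (ofWord p (α i) = x ∨ -ofWord p (α i) = x) := by
  obtain ⟨w, hw, i, rfl⟩ := hx
  obtain ⟨c, hc, rfl⟩ := exists_isReduced_of_mem_W hw
  rcases c.eq_nil_or_concat' with rfl | ⟨p, y, rfl⟩
  · exact ⟨[], i, List.isChain_singleton i, Or.inl rfl⟩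
  by_cases hyi : y = i
  · subst hyi
    exact ⟨p, y, hc, Or.inr (by simp)⟩
  · exact ⟨p ++ [y], i, isReduced_append_singleton_append_singleton.mpr ⟨hc, hyi⟩, Or.inl rfl⟩

lemma mem_Φpos_or_neg_mem_Φpos {x : V} (hx : x ∈ Φ) : x ∈ Φpos ∨ -x ∈ Φpos := by
  obtain ⟨p, i, hp, rfl | rfl⟩ := exists_isReduced_of_mem_Φ hx
  · exact Or.inl (ofWord_apply_α_mem_Φpos hp)
  · exact Or.inr (by simpa using ofWord_apply_α_mem_Φpos hp)

lemma mem_Φpos_iff_exists_isReduced {x : V} :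
    x ∈ Φpos ↔ ∃ p i, IsReduced (p ++ [i]) ∧ ofWord p (α i) = x := by
  refine ⟨fun hx => ?_, fun ⟨p, i, hp, hpx⟩ => hpx ▸ ofWord_apply_α_mem_Φpos hp⟩
  obtain ⟨p, i, hp, hpx | hpx⟩ := exists_isReduced_of_mem_Φ hx.1
  · exact ⟨p, i, hp, hpx⟩
  · exact absurd (hpx ▸ hx) (by simpa using neg_notMem_Φpos (ofWord_apply_α_mem_Φpos hp))

lemma σ_apply_mem_Φpos {x : V} (hx : x ∈ Φpos) {y : Fin 3} (hxy : x ≠ α y) :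
    σ y x ∈ Φpos := by
  obtain ⟨p, i, hp, rfl⟩ := mem_Φpos_iff_exists_isReduced.mp hx
  rcases p with _ | ⟨a, p⟩
  · have hiy : y ≠ i := by rintro rfl; exact hxy rfl
    simpa using ofWord_apply_α_mem_Φpos (l := [y]) (List.isChain_pair.mpr hiy)
  by_cases hay : a = y
  · subst hay
    simpa [← mul_assoc] using ofWord_apply_α_mem_Φpos hp.tail
  · simpa [← mul_assoc] using ofWord_apply_α_mem_Φpos (l := y :: a :: p)
      (List.isChain_cons_cons.mpr ⟨Ne.symm hay, hp⟩)

lemma mem_inversions_iff {w : V ≃ₗ[ℝ] V} {x : V} :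
    x ∈ Inversions w ↔ x ∈ Φpos ∧ -w.symm x ∈ Φpos := by
  refine and_congr_right fun _ => ⟨?_, fun h => ⟨w.symm x, by simpa using h, by simp⟩⟩
  rintro ⟨y, hy, rfl⟩
  simpa using hy

lemma inversions_one : Inversions 1 = ∅ :=
  Set.eq_empty_of_forall_notMem fun _ hx =>
    neg_notMem_Φpos (mem_inversions_iff.mp hx).1 (mem_inversions_iff.mp hx).2

lemma apply_α_notMem_inversions (w : V ≃ₗ[ℝ] V) (y : Fin 3) : w (α y) ∉ Inversions w := by
  rw [mem_inversions_iff, LinearEquiv.symm_apply_apply]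
  exact fun h => neg_notMem_Φpos (α_mem_Φpos y) h.2

lemma symm_mul_σ_apply (w : V ≃ₗ[ℝ] V) (y : Fin 3) (x : V) :
    (w * σ y).symm x = σ y (w.symm x) := rfl

theorem inversions_mul_σ {w : V ≃ₗ[ℝ] V} {y : Fin 3} (h : w (α y) ∈ Φpos) :
    Inversions (w * σ y) = insert (w (α y)) (Inversions w) := by
  ext x
  rw [Set.mem_insert_iff, mem_inversions_iff, mem_inversions_iff]
  by_cases hx : x = w (α y)
  · subst hx
    simpa [symm_mul_σ_apply] using ⟨h, α_mem_Φpos y⟩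
  simp only [hx, false_or, and_congr_right_iff]
  intro hxpos
  have hz : w.symm x ≠ α y := fun hz => hx (by rw [← hz, LinearEquiv.apply_symm_apply])
  rw [symm_mul_σ_apply, ← map_neg]
  constructor
  · intro hσ
    have hne : σ y (-w.symm x) ≠ α y := fun he => hz (by simpa using congrArg (σ y) he)
    simpa using σ_apply_mem_Φpos hσ hne
  · intro hneg
    have hne : -w.symm x ≠ α y := fun he =>
      neg_notMem_Φpos h (by rwa [← he, map_neg, LinearEquiv.apply_symm_apply, neg_neg])
    exact σ_apply_mem_Φpos hneg hne

theorem inversions_biclosed {w : V ≃ₗ[ℝ] V} (hw : w ∈ W) : IsBiclosed (Inversions w) := by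
  have hΦ : ∀ x ∈ Φ, w.symm x ∈ Φ := fun _ => apply_mem_Φ (inv_mem hw)
  refine ⟨fun x hx => hx.1, ?_, ?_⟩
  · rintro a ha b hb x ⟨hx, hxpos⟩
    rw [mem_inversions_iff] at ha hb ⊢
    refine ⟨hxpos, mem_Φpos_iff_nonneg.mpr ⟨neg_mem_Φ (hΦ x hxpos.1), ?_⟩⟩
    refine nonneg_of_mem_nnspan ?_ (map_mem_nnspan_pair (-w.symm.toLinearMap) hx)
    rintro v (rfl | rfl)
    exacts [(mem_Φpos_iff_nonneg.mp ha.2).2, (mem_Φpos_iff_nonneg.mp hb.2).2]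
  · rintro a ⟨ha, ha'⟩ b ⟨hb, hb'⟩ x ⟨hx, hxpos⟩
    have hpos : ∀ v ∈ Φpos, v ∉ Inversions w → w.symm v ∈ Φpos := fun v hv hv' =>
      (mem_Φpos_or_neg_mem_Φpos (hΦ v hv.1)).resolve_right
        fun h => hv' (mem_inversions_iff.mpr ⟨hv, h⟩)
    refine ⟨hxpos, fun hxinv => neg_notMem_Φpos ?_ (mem_inversions_iff.mp hxinv).2⟩
    refine mem_Φpos_iff_nonneg.mpr ⟨hΦ x hxpos.1, nonneg_of_mem_nnspan ?_
      (map_mem_nnspan_pair w.symm.toLinearMap hx)⟩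
    rintro v (rfl | rfl)
    exacts [(mem_Φpos_iff_nonneg.mp (hpos a ha ha')).2,
      (mem_Φpos_iff_nonneg.mp (hpos b hb hb')).2]

/-- `σ c₀ ⋯ σ c_{j-1} (α c_j)`, the `j`-th inversion of a reduced word `c` (junk for
`j ≥ c.length`). -/
def root (c : List (Fin 3)) (j : ℕ) : V := ofWord (c.take j) (α (c.getD j 0))

lemma take_append_getD {c : List (Fin 3)} {j : ℕ} (hj : j < c.length) :
    c.take j ++ [c.getD j 0] = c.take (j + 1) := by
  rw [List.getD_eq_getElem c 0 hj, ← List.concat_eq_append, List.take_concat_get hj]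

lemma getD_ne_getD_succ {c : List (Fin 3)} (hc : IsReduced c) {s : ℕ} (hs : s + 1 < c.length) :
    c.getD s 0 ≠ c.getD (s + 1) 0 := by
  rw [List.getD_eq_getElem c 0 (by omega), List.getD_eq_getElem c 0 hs]
  exact List.isChain_iff_getElem.mp hc s hs

lemma root_mem_Φpos {c : List (Fin 3)} (hc : IsReduced c) {j : ℕ} (hj : j < c.length) :
    root c j ∈ Φpos :=
  ofWord_apply_α_mem_Φpos (by rw [take_append_getD hj]; exact hc.take _)

lemma root_append_of_lt {c : List (Fin 3)} (d : List (Fin 3)) {j : ℕ} (hj : j < c.length) :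
    root (c ++ d) j = root c j := by
  simp [root, List.take_append_of_le_length hj.le, List.getElem?_append_left hj]

lemma root_append_singleton_length (c : List (Fin 3)) (y : Fin 3) :
    root (c ++ [y]) c.length = ofWord c (α y) := by
  simp [root]

theorem inversions_ofWord {c : List (Fin 3)} (hc : IsReduced c) :
    Inversions (ofWord c) = {x | ∃ j < c.length, root c j = x} := by
  induction c using List.reverseRecOn with
  | nil => simp [inversions_one]
  | append_singleton c y ih =>
    have hcy := ofWord_apply_α_mem_Φpos hc
    rw [ofWord_append, ofWord_cons, ofWord_nil, mul_one, inversions_mul_σ hcy,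
      ih hc.left_of_append]
    ext x
    simp only [Set.mem_insert_iff, Set.mem_ofPred_eq, List.length_append, List.length_singleton]
    constructor
    · rintro (rfl | ⟨j, hj, rfl⟩)
      · exact ⟨c.length, by omega, root_append_singleton_length c y⟩
      · exact ⟨j, by omega, root_append_of_lt _ hj⟩
    · rintro ⟨j, hj, rfl⟩
      rcases (Nat.lt_succ_iff.mp hj).lt_or_eq with hj | rfl
      · exact Or.inr ⟨j, hj, (root_append_of_lt _ hj).symm⟩
      · exact Or.inl (root_append_singleton_length c y)

lemma root_succ {c : List (Fin 3)} (hc : IsReduced c) {s : ℕ} (hs : s + 1 < c.length) :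
    root c (s + 1) = (2 : ℝ) • root c s + ofWord (c.take s) (α (c.getD (s + 1) 0)) := by
  rw [root, ← take_append_getD (by omega), ofWord_append_singleton_apply,
    σ_apply_α_of_ne (getD_ne_getD_succ hc hs), map_add, map_smul, add_comm, root]

lemma root_add_two {c : List (Fin 3)} (hc : IsReduced c) {s : ℕ} (hs : s + 2 < c.length)
    (he : c.getD (s + 2) 0 = c.getD s 0) :
    root c (s + 2) - root c (s + 1) = root c (s + 1) - root c s := by
  have hback : ofWord (c.take (s + 1)) (α (c.getD s 0)) = -root c s := by
    rw [← take_append_getD (by omega), ofWord_append_singleton_apply, σ_apply_α_self, map_neg,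
      root]
  rw [root_succ hc hs, he, hback, root_succ hc (by omega)]
  module

lemma ofWord_apply_α_notMem_inversions {p q : List (Fin 3)} {y : Fin 3}
    (h : IsReduced (y :: q)) : ofWord p (α y) ∉ Inversions (ofWord (p ++ q)) := by
  have hpos : ofWord q.reverse (α y) ∈ Φpos :=
    ofWord_apply_α_mem_Φpos (by simpa using h.reverse)
  rw [mem_inversions_iff, ofWord_append]
  change ¬(_ ∧ -(ofWord q).symm ((ofWord p).symm (ofWord p (α y))) ∈ Φpos)
  rw [LinearEquiv.symm_apply_apply, ofWord_symm]
  exact fun h' => neg_notMem_Φpos hpos h'.2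

def Alternates (c : List (Fin 3)) (r m : ℕ) : Prop :=
  ∀ s, r ≤ s → s + 2 ≤ m → c.getD (s + 2) 0 = c.getD s 0

lemma exists_alternates_start (c : List (Fin 3)) {m : ℕ} (hm : 0 < m) :
    ∃ r < m, Alternates c r m ∧ (r = 0 ∨ c.getD (r + 1) 0 ≠ c.getD (r - 1) 0) := by
  classical
  have hex : ∃ r, r < m ∧ Alternates c r m := ⟨m - 1, by omega, fun s _ _ => by omega⟩
  obtain ⟨hrm, halt⟩ := Nat.find_spec hex
  refine ⟨Nat.find hex, hrm, halt, ?_⟩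
  rcases Nat.eq_zero_or_pos (Nat.find hex) with h0 | hpos
  · exact Or.inl h0
  refine Or.inr fun he =>
    Nat.find_min hex (Nat.sub_one_lt_of_lt hpos) ⟨by omega, fun t hst htm => ?_⟩
  rcases hst.eq_or_lt with rfl | hst
  · rw [show Nat.find hex - 1 + 2 = Nat.find hex + 1 by omega]
    exact he
  · exact halt t (by omega) htm

lemma root_eq_of_alternates {c : List (Fin 3)} (hc : IsReduced c) {r m : ℕ} (hm : m < c.length)
    (halt : Alternates c r m) {b n : ℕ} (hb : r ≤ b) (hn : b + n ≤ m) :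
    root c (b + n) = root c b + (n : ℝ) • (root c (b + 1) - root c b) := by
  have := eq_add_nsmul_of_sub_eq_sub (f := fun t => root c (b + t)) (N := m - b)
    (fun t ht => by
      simpa only [add_assoc] using
        root_add_two hc (s := b + t) (by omega) (halt _ (by omega) (by omega)))
    (n := n) (by omega)
  simpa [Nat.cast_smul_eq_nsmul] using this

lemma root_succ_mem_of_alternates {c : List (Fin 3)} (hc : IsReduced c) {R : Set V}
    (hR : IsClosedSet R) {r b m : ℕ} (hm : m < c.length) (halt : Alternates c r m)
    (hrb : r ≤ b) (hbm : b + 1 < m) (hb : root c b ∈ R) (hmR : root c m ∈ R) :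
    root c (b + 1) ∈ R := by
  have hn : (1 : ℝ) < ((m - b : ℕ) : ℝ) := by norm_cast; omega
  set n : ℝ := ((m - b : ℕ) : ℝ)
  have hprog := root_eq_of_alternates hc hm halt hrb (n := m - b) (by omega)
  rw [Nat.add_sub_cancel' (by omega)] at hprog
  have hcomb : root c (b + 1) = (1 / n) • root c m + (1 - 1 / n) • root c b := by
    rw [hprog, smul_add, smul_smul, one_div, inv_mul_cancel₀ (by positivity)]
    module
  have hspan := smul_add_smul_mem_nnspan_pair (a := root c m) (b := root c b)
    (s := 1 / n) (t := 1 - 1 / n) (by positivity)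
    (by rw [sub_nonneg, div_le_one (by positivity)]; exact hn.le)
  exact hR _ hmR _ hb ⟨hcomb ▸ hspan, root_mem_Φpos hc (by omega)⟩

lemma root_notMem_of_alternates {c : List (Fin 3)} (hc : IsReduced c) {R : Set V}
    (hR : IsClosedSet (Φpos \ R)) (hsub : R ⊆ Inversions (ofWord c)) {r m : ℕ}
    (hm : m < c.length) (hrm : r < m) (halt : Alternates c r m)
    (hstart : r = 0 ∨ c.getD (r + 1) 0 ≠ c.getD (r - 1) 0) (hr : root c r ∉ R) :
    root c m ∉ R := by
  set γ := ofWord (c.take r) (α (c.getD (r + 1) 0))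
  have hγ : γ ∈ Φpos := by
    refine ofWord_apply_α_mem_Φpos ?_
    rcases r with _ | s
    · exact List.isChain_singleton _
    rw [← take_append_getD (by omega)]
    refine isReduced_append_singleton_append_singleton.mpr
      ⟨by rw [take_append_getD (by omega)]; exact hc.take _, fun h => ?_⟩
    exact hstart.resolve_left s.succ_ne_zero h.symm
  have hγR : γ ∉ R := by
    have hred : IsReduced (c.getD (r + 1) 0 :: c.drop r) := by
      have hdrop := hc.drop r
      rw [List.drop_eq_getElem_cons (by omega)] at hdrop ⊢
      rw [← List.getD_eq_getElem c 0] at hdrop ⊢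
      exact List.isChain_cons_cons.mpr ⟨(getD_ne_getD_succ hc (by omega)).symm, hdrop⟩
    exact fun h => ofWord_apply_α_notMem_inversions hred (List.take_append_drop r c ▸ hsub h)
  have hcomb : root c m = ((m - r : ℕ) + 1 : ℝ) • root c r + ((m - r : ℕ) : ℝ) • γ := by
    have hprog := root_eq_of_alternates hc hm halt le_rfl (n := m - r) (by omega)
    rw [Nat.add_sub_cancel' hrm.le, root_succ hc (by omega)] at hprog
    rw [hprog]
    module
  have hspan := smul_add_smul_mem_nnspan_pair (a := root c r) (b := γ)
    (s := (m - r : ℕ) + 1) (t := (m - r : ℕ)) (by positivity) (by positivity)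
  exact fun hmR => (hR _ ⟨root_mem_Φpos hc (by omega), hr⟩ _ ⟨hγ, hγR⟩
    ⟨hcomb ▸ hspan, root_mem_Φpos hc hm⟩).2 hmR

theorem root_mem_of_root_last_mem {c : List (Fin 3)} (hc : IsReduced c) {m : ℕ}
    (hk : c.length = m + 1) {R : Set V} (hR : IsBiclosed R) (hsub : R ⊆ Inversions (ofWord c))
    (hm : root c m ∈ R) {j : ℕ} (hj : j < c.length) : root c j ∈ R := by
  by_contra hjR
  obtain ⟨j₀, m₀, hjm, hm₀, hm₀R, hbefore, hgap⟩ :=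
    exists_first_gap (P := fun t => root c t ∈ R) hjR hm (by omega)
  obtain ⟨r, hrm, halt, hstart⟩ := exists_alternates_start c (m := m₀) (by omega)
  rcases le_or_gt j₀ r with hjr | hrj
  · exact root_notMem_of_alternates hc hR.2.2 hsub (by omega) hrm halt hstart
      (hgap r hjr hrm) hm₀R
  · obtain ⟨b, rfl⟩ : ∃ b, j₀ = b + 1 := ⟨j₀ - 1, by omega⟩
    exact hgap (b + 1) le_rfl hjm (root_succ_mem_of_alternates hc hR.2.1 (by omega) halt
      (by omega) hjm (hbefore b (by omega)) hm₀R)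

end U3

open U3 in
/-- For every nonidentity `w ∈ W`, the inversion set `Inv(w)` is a complete
join-irreducible of the extended weak order: there is a biclosed set `R* ⊊ Inv(w)`
such that every biclosed `R' ⊊ Inv(w)` satisfies `R' ⊆ R*`. -/
theorem inversion_set_complete_join_irreducible (w : V ≃ₗ[ℝ] V)
    (hw : w ∈ W) (hne : w ≠ 1) :
    ∃ Rstar : Set V, IsBiclosed Rstar ∧ Rstar ⊂ Inversions w ∧
      ∀ R' : Set V, IsBiclosed R' → R' ⊂ Inversions w → R' ⊆ Rstar := by
  obtain ⟨c, hc, rfl⟩ := exists_isReduced_of_mem_W hw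
  obtain ⟨p, y, rfl⟩ := c.eq_nil_or_concat'.resolve_left (by rintro rfl; exact hne rfl)
  have hinv : Inversions (ofWord (p ++ [y])) =
      insert (ofWord p (α y)) (Inversions (ofWord p)) := by
    simpa using inversions_mul_σ (ofWord_apply_α_mem_Φpos hc)
  refine ⟨Inversions (ofWord p), inversions_biclosed (ofWord_mem_W p),
    hinv ▸ Set.ssubset_insert (apply_α_notMem_inversions _ y), fun R' hR' hsub => ?_⟩
  by_cases hlast : ofWord p (α y) ∈ R'
  · refine absurd (fun x hx => ?_) hsub.not_subset
    rw [inversions_ofWord hc] at hx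
    obtain ⟨j, hj, rfl⟩ := hx
    exact root_mem_of_root_last_mem hc (m := p.length) (by simp) hR' hsub.subset
      (by rwa [root_append_singleton_length]) hj
  · exact (Set.subset_insert_iff_of_notMem hlast).mp (hinv ▸ hsub.subset)
end
end
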